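/- Let α ∈ [0,1], let μ⃗ = (μ₁,μ₂,μ₃) ∈ M_α, and let Φ₁, Φ₂, Φ₃ be polynomials with Φ₁′ − Φ₂′ = Φ₃′. If D_{h_z}(μ⃗) = 0 for every z ∈ ℂ ∖ (supp μ₁ ∪ supp μ₂ ∪ supp μ₃), then D_q(μ⃗) = 0 for every polynomial q. -/

import Mathlib

open MeasureTheory Complex Polynomial

noncomputable section

/-- The (topological) support of a measure on `ℂ`: the set of points all of whose open
neighborhoods have positive measure. -/
def msupport (μ : Measure ℂ) : Set ℂ :=
  {x : ℂ | ∀ U : Set ℂ, IsOpen U → x ∈ U → μ U ≠ 0}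

/-- The interaction matrix `A`. -/
def interA : Fin 3 → Fin 3 → ℝ :=
  ![![1, 1/2, 1/2], ![1/2, 1, -1/2], ![1/2, -1/2, 1]]

/-- The logarithmic energy `I(μ,ν) = ∬ log(1/|x-y|) dμ(x) dν(y)`. -/
def logEnergy (μ ν : Measure ℂ) : ℝ :=
  ∫ x, ∫ y, Real.log (1 / ‖x - y‖) ∂ν ∂μ

/-- The total energy functional `E(μ⃗)` with external fields `φ_j = Re Φ_j`. -/
def energyE (Φ : Fin 3 → Polynomial ℂ) (μ : Fin 3 → Measure ℂ) : ℝ :=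
  (∑ j, ∑ k, interA j k * logEnergy (μ j) (μ k)) +
    ∑ j, ∫ x, ((Φ j).eval x).re ∂(μ j)

/-- Membership in the class `M_α`: finite positive Borel measures with compact supports of zero
planar Lebesgue measure, finite energy (stated as integrability of all the energy integrands),
finite pairwise intersections of supports, and the prescribed total masses. -/
structure InClassM (α : ℝ) (Φ : Fin 3 → Polynomial ℂ) (μ : Fin 3 → Measure ℂ) : Prop where
  finite : ∀ j, IsFiniteMeasure (μ j)
  compactSupp : ∀ j, IsCompact (msupport (μ j))
  lebesgueNull : ∀ j, volume (msupport (μ j)) = 0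
  energyInt : ∀ j k, Integrable (fun p : ℂ × ℂ => Real.log (1 / ‖p.1 - p.2‖)) ((μ j).prod (μ k))
  fieldInt : ∀ j, Integrable (fun x => ((Φ j).eval x).re) (μ j)
  interFinite : Set.Finite ((msupport (μ 0) ∩ msupport (μ 1)) ∪
      (msupport (μ 0) ∩ msupport (μ 2)) ∪ (msupport (μ 1) ∩ msupport (μ 2)))
  mass01 : (μ 0 Set.univ).toReal + (μ 1 Set.univ).toReal = 1
  mass02 : (μ 0 Set.univ).toReal + (μ 2 Set.univ).toReal = α
  mass12 : (μ 1 Set.univ).toReal - (μ 2 Set.univ).toReal = 1 - α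

/-- The quantity `D_h(μ⃗)`. -/
def Dvar (Φ : Fin 3 → Polynomial ℂ) (μ : Fin 3 → Measure ℂ) (h : ℂ → ℂ) : ℂ :=
  -(∑ j, ∑ k, (interA j k : ℂ) * ∫ x, ∫ y, (h x - h y) / (x - y) ∂(μ k) ∂(μ j)) +
    ∑ j, ∫ x, (Polynomial.derivative (Φ j)).eval x * h x ∂(μ j)

/-- The pushforward `μ^t` of `μ` under the variation `z ↦ z + t h(z)`. -/
def pushMeas (h : ℂ → ℂ) (t : ℝ) (μ : Measure ℂ) : Measure ℂ :=
  Measure.map (fun z => z + (t : ℂ) * h z) μ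

/-- `μ⃗` is an `α`-critical measure: for every `h ∈ C²(ℂ)`,
`(E(μ⃗^t) - E(μ⃗))/t → 0` as `t → 0`. -/
def IsCriticalMeasure (Φ : Fin 3 → Polynomial ℂ) (μ : Fin 3 → Measure ℂ) : Prop :=
  ∀ h : ℂ → ℂ, ContDiff ℝ 2 h →
    Filter.Tendsto
      (fun t : ℝ => (energyE Φ (fun j => pushMeas h t (μ j)) - energyE Φ μ) / t)
      (nhdsWithin 0 {(0 : ℝ)}ᶜ) (nhds 0)

/-- The Cauchy transform `C^μ(z) = ∫ dμ(x)/(x - z)`. -/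
def cauchyT (μ : Measure ℂ) (z : ℂ) : ℂ := ∫ x, (x - z)⁻¹ ∂μ

/-- The functions `ξ₁, ξ₂, ξ₃` (0-indexed). -/
def xiF (Φ : Fin 3 → Polynomial ℂ) (μ : Fin 3 → Measure ℂ) : Fin 3 → ℂ → ℂ :=
  ![fun z => ((Polynomial.derivative (Φ 0)).eval z + (Polynomial.derivative (Φ 1)).eval z) / 3
      + cauchyT (μ 0) z + cauchyT (μ 1) z,
    fun z => -((Polynomial.derivative (Φ 0)).eval z + (Polynomial.derivative (Φ 2)).eval z) / 3
      - cauchyT (μ 0) z - cauchyT (μ 2) z,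
    fun z => -(Polynomial.derivative (Φ 1)).eval z / 3 + (Polynomial.derivative (Φ 2)).eval z / 3
      - cauchyT (μ 1) z + cauchyT (μ 2) z]

/-- The function `R(z)`. -/
def Rpol (Φ : Fin 3 → Polynomial ℂ) (μ : Fin 3 → Measure ℂ) (z : ℂ) : ℂ :=
  (1/9) * ∑ j, ∑ k, (interA j k : ℂ) * (Polynomial.derivative (Φ j)).eval z *
      (Polynomial.derivative (Φ k)).eval z
  - ∑ j, ∫ x, ((Polynomial.derivative (Φ j)).eval x - (Polynomial.derivative (Φ j)).eval z)
      / (x - z) ∂(μ j)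

/-!
Expanding `x ^ m / (x - z) = z ^ m / (x - z) + ∑_{i<m} z ^ (m-1-i) x ^ i` and using linearity of
`h ↦ D_h` on functions with bounded difference quotients on the supports, the hypothesis gives
`D_{x^m/(x-z)} = ∑_{i<m} z ^ (m-1-i) D_{x^i}` for every `z` outside a disc containing the supports.
If `D_{x^i} = 0` for `i < n`, then for `m = n + 1` the right side is `D_{x^n}`, while the left side
is `O(1/|z|)` because both the kernel and the field term of `x ^ (n+1) / (x - z)` are. So all
`D_{x^n}` vanish by strong induction, and `D_q = 0` by linearity.
-/

open Finset Metric Filter Topology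

lemma support_subset_msupport (μ : Measure ℂ) : μ.support ⊆ msupport μ :=
  fun x hx _ hU hxU => ((Measure.mem_support_iff_forall x).1 hx _ (hU.mem_nhds hxU)).ne'

lemma ae_mem_msupport (μ : Measure ℂ) : ∀ᵐ x ∂μ, x ∈ msupport μ :=
  mem_of_superset Measure.support_mem_ae (support_subset_msupport μ)

lemma exists_norm_derivative_eval_le {ι : Type*} [Fintype ι] (Φ : ι → ℂ[X]) {S : Set ℂ}
    (hS : IsCompact S) : ∃ M, ∀ j, ∀ x ∈ S, ‖(derivative (Φ j)).eval x‖ ≤ M := by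
  obtain ⟨M, hM⟩ := hS.exists_bound_of_continuousOn
    (f := fun x j => (derivative (Φ j)).eval x) (by fun_prop)
  exact ⟨M, fun j x hx => (norm_le_pi_norm (fun j => (derivative (Φ j)).eval x) j).trans (hM x hx)⟩

/-- The kernel of `D_h`; on the diagonal it is `0` (as `x / 0 = 0`), not `h'`. -/
def diffQuot (h : ℂ → ℂ) (x y : ℂ) : ℂ := (h x - h y) / (x - y)

lemma diffQuot_mul (f g : ℂ → ℂ) (x y : ℂ) :
    diffQuot (fun x => f x * g x) x y = f x * diffQuot g x y + g y * diffQuot f x y := by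
  unfold diffQuot
  ring

lemma norm_diffQuot_pow_le {R : ℝ} {x y : ℂ} (hx : ‖x‖ ≤ R) (hy : ‖y‖ ≤ R) (m : ℕ) :
    ‖diffQuot (· ^ m) x y‖ ≤ m * R ^ (m - 1) := by
  have hR : 0 ≤ R := (norm_nonneg x).trans hx
  rcases eq_or_ne x y with rfl | hxy
  · simp only [diffQuot, sub_self, div_zero, norm_zero]
    positivity
  rw [diffQuot, ← geom_sum₂_mul, mul_div_cancel_right₀ _ (sub_ne_zero.2 hxy)]
  calc _ ≤ ∑ _i ∈ range m, R ^ (m - 1) := norm_sum_le_of_le _ fun i hi => ?_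
    _ = m * R ^ (m - 1) := by simp
  calc ‖x ^ i * y ^ (m - 1 - i)‖ = ‖x‖ ^ i * ‖y‖ ^ (m - 1 - i) := by simp
    _ ≤ R ^ i * R ^ (m - 1 - i) := by gcongr
    _ = R ^ (m - 1) := by rw [← pow_add]; congr 1; have := mem_range.1 hi; omega

lemma norm_diffQuot_inv_sub_le {x y z : ℂ} (hx : x ≠ z) (hy : y ≠ z) :
    ‖diffQuot (fun x => (x - z)⁻¹) x y‖ ≤ ‖(x - z)⁻¹‖ * ‖(y - z)⁻¹‖ := by
  rcases eq_or_ne x y with rfl | hxy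
  · simp only [diffQuot, sub_self, div_zero, norm_zero]
    positivity
  have : diffQuot (fun x => (x - z)⁻¹) x y = -((x - z)⁻¹ * (y - z)⁻¹) := by
    unfold diffQuot
    field_simp [sub_ne_zero.2 hx, sub_ne_zero.2 hy, sub_ne_zero.2 hxy]
    ring
  rw [this, norm_neg, norm_mul]

section Dvar

variable {Φ : Fin 3 → ℂ[X]} {μ : Fin 3 → Measure ℂ}

structure DvarIntegrable (Φ : Fin 3 → ℂ[X]) (μ : Fin 3 → Measure ℂ) (h : ℂ → ℂ) : Prop where
  kernel : ∀ j k, Integrable (Function.uncurry (diffQuot h)) ((μ j).prod (μ k))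
  field : ∀ j, Integrable (fun x => (derivative (Φ j)).eval x * h x) (μ j)

lemma DvarIntegrable.const_mul {h : ℂ → ℂ} (hh : DvarIntegrable Φ μ h) (c : ℂ) :
    DvarIntegrable Φ μ (fun x => c * h x) where
  kernel j k := by
    refine ((hh.kernel j k).const_mul c).congr (ae_of_all _ fun p => ?_)
    simp only [Function.uncurry, diffQuot]
    ring
  field j := by
    refine ((hh.field j).const_mul c).congr (ae_of_all _ fun x => ?_)
    ring

lemma DvarIntegrable.add {f g : ℂ → ℂ} (hf : DvarIntegrable Φ μ f) (hg : DvarIntegrable Φ μ g) :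
    DvarIntegrable Φ μ (fun x => f x + g x) where
  kernel j k := by
    refine ((hf.kernel j k).add (hg.kernel j k)).congr (ae_of_all _ fun p => ?_)
    simp only [Function.uncurry, diffQuot, Pi.add_apply]
    ring
  field j := by
    refine ((hf.field j).add (hg.field j)).congr (ae_of_all _ fun x => ?_)
    simp only [Pi.add_apply]
    ring

lemma DvarIntegrable.zero : DvarIntegrable Φ μ (fun _ => 0) where
  kernel j k :=
    (integrable_zero _ ℂ _).congr (ae_of_all _ fun p => by simp [Function.uncurry, diffQuot])
  field j := by simp

lemma DvarIntegrable.finset_sum {ι : Type*} {s : Finset ι} {g : ι → ℂ → ℂ}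
    (hg : ∀ i ∈ s, DvarIntegrable Φ μ (g i)) : DvarIntegrable Φ μ (fun x => ∑ i ∈ s, g i x) := by
  rw [← Finset.sum_fn]
  exact Finset.sum_induction g (DvarIntegrable Φ μ) (fun _ _ hf hg => hf.add hg)
    DvarIntegrable.zero hg

lemma Dvar_congr_ae {h g : ℂ → ℂ} (hhg : ∀ j, h =ᵐ[μ j] g) : Dvar Φ μ h = Dvar Φ μ g := by
  have hK : ∀ j k, ∫ x, ∫ y, (h x - h y) / (x - y) ∂μ k ∂μ j
      = ∫ x, ∫ y, (g x - g y) / (x - y) ∂μ k ∂μ j := by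
    intro j k
    refine integral_congr_ae ?_
    filter_upwards [hhg j] with x hx
    refine integral_congr_ae ?_
    filter_upwards [hhg k] with y hy
    rw [hx, hy]
  have hF : ∀ j, ∫ x, (derivative (Φ j)).eval x * h x ∂μ j
      = ∫ x, (derivative (Φ j)).eval x * g x ∂μ j := by
    intro j
    refine integral_congr_ae ?_
    filter_upwards [hhg j] with x hx
    rw [hx]
  simp only [Dvar, hK, hF]

lemma Dvar_const_mul (c : ℂ) (h : ℂ → ℂ) : Dvar Φ μ (fun x => c * h x) = c * Dvar Φ μ h := by
  have hK : ∀ x y, (c * h x - c * h y) / (x - y) = c * ((h x - h y) / (x - y)) := by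
    intro x y
    ring
  have hF : ∀ j x,
      (derivative (Φ j)).eval x * (c * h x) = c * ((derivative (Φ j)).eval x * h x) := by
    intro j x
    ring
  simp only [Dvar, hK, hF, integral_const_mul, mul_left_comm (interA _ _ : ℂ) c, ← Finset.mul_sum]
  ring

lemma Dvar_add [∀ j, IsFiniteMeasure (μ j)] {f g : ℂ → ℂ} (hf : DvarIntegrable Φ μ f)
    (hg : DvarIntegrable Φ μ g) : Dvar Φ μ (fun x => f x + g x) = Dvar Φ μ f + Dvar Φ μ g := by
  have hK : ∀ j k, ∫ x, ∫ y, (f x + g x - (f y + g y)) / (x - y) ∂μ k ∂μ j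
      = ∫ x, ∫ y, (f x - f y) / (x - y) ∂μ k ∂μ j
        + ∫ x, ∫ y, (g x - g y) / (x - y) ∂μ k ∂μ j := fun j k => by
    simpa only [Function.uncurry, diffQuot, add_sub_add_comm, add_div]
      using integral_integral_add (hf.kernel j k) (hg.kernel j k)
  have hF : ∀ j, ∫ x, (derivative (Φ j)).eval x * (f x + g x) ∂μ j
      = ∫ x, (derivative (Φ j)).eval x * f x ∂μ j
        + ∫ x, (derivative (Φ j)).eval x * g x ∂μ j := fun j => by
    simp only [mul_add]
    exact integral_add (hf.field j) (hg.field j)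
  rw [Dvar, Dvar, Dvar]
  simp only [hK, hF]
  simp only [mul_add, Finset.sum_add_distrib]
  ring

lemma Dvar_finset_sum [∀ j, IsFiniteMeasure (μ j)] {ι : Type*} (s : Finset ι) (g : ι → ℂ → ℂ)
    (hg : ∀ i ∈ s, DvarIntegrable Φ μ (g i)) :
    Dvar Φ μ (fun x => ∑ i ∈ s, g i x) = ∑ i ∈ s, Dvar Φ μ (g i) := by
  classical
  induction s using Finset.induction_on with
  | empty => simp [Dvar]
  | insert i s hi ih =>
    simp only [Finset.sum_insert hi]
    rw [Dvar_add (hg i (mem_insert_self i s))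
      (DvarIntegrable.finset_sum fun i hi' => hg i (mem_insert_of_mem hi')),
      ih fun i hi' => hg i (mem_insert_of_mem hi')]

end Dvar

section Bounds

variable {Φ : Fin 3 → ℂ[X]} {μ : Fin 3 → Measure ℂ} {S : Set ℂ} {h : ℂ → ℂ} {C : ℝ}

structure DvarBoundOn (Φ : Fin 3 → ℂ[X]) (S : Set ℂ) (h : ℂ → ℂ) (C : ℝ) : Prop where
  kernel : ∀ x ∈ S, ∀ y ∈ S, ‖diffQuot h x y‖ ≤ C
  field : ∀ j, ∀ x ∈ S, ‖(derivative (Φ j)).eval x * h x‖ ≤ C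

lemma DvarBoundOn.dvarIntegrable [∀ j, IsFiniteMeasure (μ j)] (hb : DvarBoundOn Φ S h C)
    (hS : ∀ j, ∀ᵐ x ∂μ j, x ∈ S) (hh : Measurable h) : DvarIntegrable Φ μ h where
  kernel j k := by
    refine Integrable.of_bound (((hh.comp measurable_fst).sub (hh.comp measurable_snd)).div
      (measurable_fst.sub measurable_snd)).aestronglyMeasurable C ?_
    filter_upwards [Measure.quasiMeasurePreserving_fst.ae (hS j),
      Measure.quasiMeasurePreserving_snd.ae (hS k)] with p hx hy
    exact hb.kernel _ hx _ hy
  field j := by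
    refine Integrable.of_bound
      ((derivative (Φ j)).continuous.measurable.mul hh).aestronglyMeasurable C ?_
    filter_upwards [hS j] with x hx
    exact hb.field j x hx

lemma norm_Dvar_le [∀ j, IsFiniteMeasure (μ j)] (hb : DvarBoundOn Φ S h C)
    (hS : ∀ j, ∀ᵐ x ∂μ j, x ∈ S) :
    ‖Dvar Φ μ h‖ ≤ C * (∑ j, ∑ k, |interA j k| * ((μ k).real Set.univ * (μ j).real Set.univ)
      + ∑ j, (μ j).real Set.univ) := by
  have hK : ∀ j k, ‖∫ x, ∫ y, (h x - h y) / (x - y) ∂μ k ∂μ j‖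
      ≤ C * (μ k).real Set.univ * (μ j).real Set.univ := by
    intro j k
    refine norm_integral_le_of_norm_le_const ?_
    filter_upwards [hS j] with x hx
    refine norm_integral_le_of_norm_le_const ?_
    filter_upwards [hS k] with y hy
    exact hb.kernel x hx y hy
  have hF : ∀ j, ‖∫ x, (derivative (Φ j)).eval x * h x ∂μ j‖ ≤ C * (μ j).real Set.univ := by
    intro j
    refine norm_integral_le_of_norm_le_const ?_
    filter_upwards [hS j] with x hx
    exact hb.field j x hx
  calc ‖Dvar Φ μ h‖
      ≤ ∑ j, ∑ k, |interA j k| * (C * (μ k).real Set.univ * (μ j).real Set.univ)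
        + ∑ j, C * (μ j).real Set.univ := by
        refine (norm_add_le _ _).trans (add_le_add ?_ ?_)
        · rw [norm_neg]
          refine (norm_sum_le _ _).trans (sum_le_sum fun j _ => ?_)
          refine (norm_sum_le _ _).trans (sum_le_sum fun k _ => ?_)
          rw [norm_mul, Complex.norm_real, Real.norm_eq_abs]
          exact mul_le_mul_of_nonneg_left (hK j k) (abs_nonneg _)
        · exact (norm_sum_le _ _).trans (sum_le_sum fun j _ => hF j)
    _ = _ := by
        rw [mul_add, Finset.mul_sum, Finset.mul_sum]
        congr 1
        refine sum_congr rfl fun j _ => ?_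
        rw [Finset.mul_sum]
        exact sum_congr rfl fun k _ => by ring

end Bounds

section Ball

variable {Φ : Fin 3 → ℂ[X]} {R M : ℝ}

lemma le_norm_sub_of_norm_le {a : ℝ} {x z : ℂ} (hx : ‖x‖ ≤ R) (hz : R + a ≤ ‖z‖) :
    a ≤ ‖x - z‖ := by
  have := norm_sub_norm_le z x
  rw [norm_sub_rev z x] at this
  linarith

lemma dvarBoundOn_pow (hR : 0 ≤ R)
    (hM : ∀ j, ∀ x ∈ closedBall (0 : ℂ) R, ‖(derivative (Φ j)).eval x‖ ≤ M) (m : ℕ) :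
    DvarBoundOn Φ (closedBall 0 R) (· ^ m) (m * R ^ (m - 1) + M * R ^ m) := by
  have hM0 : 0 ≤ M := (norm_nonneg _).trans (hM 0 0 (mem_closedBall_self hR))
  constructor
  · intro x hx y hy
    rw [mem_closedBall_zero_iff] at hx hy
    exact (norm_diffQuot_pow_le hx hy m).trans (le_add_of_nonneg_right (by positivity))
  · intro j x hx
    rw [norm_mul, norm_pow]
    refine le_add_of_nonneg_left (by positivity) |>.trans' ?_
    exact mul_le_mul (hM j x hx) (by gcongr; exact mem_closedBall_zero_iff.1 hx) (by positivity) hM0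

lemma dvarBoundOn_pow_mul_inv_sub (hR : 0 ≤ R)
    (hM : ∀ j, ∀ x ∈ closedBall (0 : ℂ) R, ‖(derivative (Φ j)).eval x‖ ≤ M)
    {δ : ℝ} (hδ : 0 < δ) {z : ℂ} (hz : R + δ⁻¹ ≤ ‖z‖) (m : ℕ) :
    DvarBoundOn Φ (closedBall 0 R) (fun x => x ^ m * (x - z)⁻¹)
      (R ^ m * δ ^ 2 + (m * R ^ (m - 1) + M * R ^ m) * δ) := by
  have hM0 : 0 ≤ M := (norm_nonneg _).trans (hM 0 0 (mem_closedBall_self hR))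
  have hsub : ∀ x ∈ closedBall (0 : ℂ) R, δ⁻¹ ≤ ‖x - z‖ := fun x hx =>
    le_norm_sub_of_norm_le (mem_closedBall_zero_iff.1 hx) hz
  have hinv : ∀ x ∈ closedBall (0 : ℂ) R, ‖(x - z)⁻¹‖ ≤ δ := fun x hx => by
    rw [norm_inv]
    exact inv_le_of_inv_le₀ hδ (hsub x hx)
  have hne : ∀ x ∈ closedBall (0 : ℂ) R, x ≠ z := fun x hx h => by
    have := hsub x hx
    rw [h, sub_self, norm_zero] at this
    exact (inv_pos.2 hδ).not_ge this
  constructor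
  · intro x hx y hy
    have hxR := mem_closedBall_zero_iff.1 hx
    have hyR := mem_closedBall_zero_iff.1 hy
    rw [diffQuot_mul]
    calc _ ≤ ‖x‖ ^ m * (‖(x - z)⁻¹‖ * ‖(y - z)⁻¹‖) + ‖(y - z)⁻¹‖ * (m * R ^ (m - 1)) := by
          refine (norm_add_le _ _).trans (add_le_add ?_ ?_) <;> rw [norm_mul]
          · rw [norm_pow]
            gcongr
            exact norm_diffQuot_inv_sub_le (hne x hx) (hne y hy)
          · exact mul_le_mul_of_nonneg_left (norm_diffQuot_pow_le hxR hyR m) (norm_nonneg _)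
      _ ≤ R ^ m * (δ * δ) + δ * (m * R ^ (m - 1)) := by
          gcongr
          exacts [hinv x hx, hinv y hy, hinv y hy]
      _ ≤ _ := by nlinarith [mul_nonneg (mul_nonneg hM0 (pow_nonneg hR m)) hδ.le]
  · intro j x hx
    calc _ = ‖(derivative (Φ j)).eval x‖ * (‖x‖ ^ m * ‖(x - z)⁻¹‖) := by
          rw [norm_mul, norm_mul, norm_pow]
      _ ≤ M * (R ^ m * δ) := by
          gcongr
          exacts [hM j x hx, mem_closedBall_zero_iff.1 hx, hinv x hx]
      _ ≤ _ := by
          have := pow_nonneg hR m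
          have := mul_nonneg (pow_nonneg hR (m - 1)) (Nat.cast_nonneg (α := ℝ) m)
          nlinarith

end Ball

section Moments

variable {Φ : Fin 3 → ℂ[X]} {μ : Fin 3 → Measure ℂ} [∀ j, IsFiniteMeasure (μ j)] {R : ℝ}

lemma dvarIntegrable_pow (hR : 0 ≤ R) (hsupp : ∀ j, ∀ᵐ x ∂μ j, x ∈ closedBall (0 : ℂ) R)
    (m : ℕ) : DvarIntegrable Φ μ (· ^ m) := by
  obtain ⟨M, hM⟩ := exists_norm_derivative_eval_le Φ (isCompact_closedBall (0 : ℂ) R)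
  exact (dvarBoundOn_pow hR hM m).dvarIntegrable hsupp (by fun_prop)

lemma dvarIntegrable_inv_sub (hR : 0 ≤ R) (hsupp : ∀ j, ∀ᵐ x ∂μ j, x ∈ closedBall (0 : ℂ) R)
    {z : ℂ} (hz : R < ‖z‖) : DvarIntegrable Φ μ (fun x => (x - z)⁻¹) := by
  obtain ⟨M, hM⟩ := exists_norm_derivative_eval_le Φ (isCompact_closedBall (0 : ℂ) R)
  have hb := dvarBoundOn_pow_mul_inv_sub hR hM (inv_pos.2 (sub_pos.2 hz))
    (by rw [inv_inv, add_sub_cancel]) 0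
  simp only [pow_zero, one_mul] at hb
  exact hb.dvarIntegrable hsupp (by fun_prop)

lemma Dvar_pow_mul_inv_sub (hR : 0 ≤ R) (hsupp : ∀ j, ∀ᵐ x ∂μ j, x ∈ closedBall (0 : ℂ) R)
    {z : ℂ} (hz : R < ‖z‖) (m : ℕ) :
    Dvar Φ μ (fun x => x ^ m * (x - z)⁻¹) = z ^ m * Dvar Φ μ (fun x => (x - z)⁻¹)
      + ∑ i ∈ range m, z ^ (m - 1 - i) * Dvar Φ μ (· ^ i) := by
  have hexp : ∀ j, (fun x => x ^ m * (x - z)⁻¹) =ᵐ[μ j]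
      fun x => z ^ m * (x - z)⁻¹ + ∑ i ∈ range m, z ^ (m - 1 - i) * x ^ i := by
    intro j
    filter_upwards [hsupp j] with x hx
    have hxz : x - z ≠ 0 := by
      rintro h
      rw [sub_eq_zero.1 h, mem_closedBall_zero_iff] at hx
      linarith
    have := geom_sum₂_mul x z m
    simp only [mul_comm (z ^ _) (x ^ _)]
    field_simp
    linear_combination -this
  have hpow := dvarIntegrable_pow (Φ := Φ) hR hsupp
  rw [Dvar_congr_ae hexp,
    Dvar_add ((dvarIntegrable_inv_sub hR hsupp hz).const_mul _)
      (DvarIntegrable.finset_sum fun i _ => (hpow i).const_mul _),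
    Dvar_const_mul, Dvar_finset_sum _ (fun i x => z ^ (m - 1 - i) * x ^ i)
      fun i _ => (hpow i).const_mul _]
  simp only [Dvar_const_mul]

lemma Dvar_pow_eq_zero (hR : 0 ≤ R) (hsupp : ∀ j, ∀ᵐ x ∂μ j, x ∈ closedBall (0 : ℂ) R)
    (hz : ∀ z : ℂ, R < ‖z‖ → Dvar Φ μ (fun x => (x - z)⁻¹) = 0) (n : ℕ) :
    Dvar Φ μ (· ^ n) = 0 := by
  induction n using Nat.strong_induction_on with
  | _ n ih =>
  obtain ⟨M, hM⟩ := exists_norm_derivative_eval_le Φ (isCompact_closedBall (0 : ℂ) R)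
  have hfar : ∀ z : ℂ, R < ‖z‖ →
      Dvar Φ μ (fun x => x ^ (n + 1) * (x - z)⁻¹) = Dvar Φ μ (· ^ n) := by
    intro z hzR
    rw [Dvar_pow_mul_inv_sub hR hsupp hzR, hz z hzR, mul_zero, zero_add, sum_range_succ,
      sum_eq_zero fun i hi => by rw [ih i (mem_range.1 hi), mul_zero], zero_add,
      Nat.add_sub_cancel, Nat.sub_self, pow_zero, one_mul]
  set κ := ∑ j, ∑ k, |interA j k| * ((μ k).real Set.univ * (μ j).real Set.univ)
    + ∑ j, (μ j).real Set.univ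
  set bound := fun δ : ℝ => (R ^ (n + 1) * δ ^ 2 + ((n + 1 : ℕ) * R ^ n + M * R ^ (n + 1)) * δ) * κ
  -- At `z = R + δ⁻¹`, `D_{x^(n+1)/(x-z)} = D_{x^n}` while its kernel and field terms are `O(δ)`.
  have hle : ∀ δ > 0, ‖Dvar Φ μ (· ^ n)‖ ≤ bound δ := by
    intro δ hδ
    have hzδ : ‖((R + δ⁻¹ : ℝ) : ℂ)‖ = R + δ⁻¹ := by
      rw [norm_real, Real.norm_of_nonneg (by positivity)]
    rw [← hfar _ (by rw [hzδ]; linarith [inv_pos.2 hδ])]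
    exact norm_Dvar_le (dvarBoundOn_pow_mul_inv_sub hR hM hδ hzδ.ge (n + 1)) hsupp
  have hlim : Tendsto bound (𝓝[>] 0) (𝓝 0) := by
    have : Continuous bound := by fun_prop
    simpa [bound] using (this.tendsto 0).mono_left nhdsWithin_le_nhds
  exact norm_le_zero_iff.1 (ge_of_tendsto hlim (eventually_nhdsWithin_of_forall hle))

lemma Dvar_eval_eq_sum (hR : 0 ≤ R) (hsupp : ∀ j, ∀ᵐ x ∂μ j, x ∈ closedBall (0 : ℂ) R) (q : ℂ[X]) :
    Dvar Φ μ (fun x => q.eval x)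
      = ∑ i ∈ range (q.natDegree + 1), q.coeff i * Dvar Φ μ (· ^ i) := by
  simp only [eval_eq_sum_range]
  rw [Dvar_finset_sum _ (fun i x => q.coeff i * x ^ i)
    fun i _ => (dvarIntegrable_pow hR hsupp i).const_mul _]
  simp only [Dvar_const_mul]

end Moments

theorem Dvar_poly_eq_zero_general (α : ℝ)
    (Φ : Fin 3 → Polynomial ℂ)
    (μ : Fin 3 → Measure ℂ) (hμ : InClassM α Φ μ)
    (hz : ∀ z : ℂ, z ∉ msupport (μ 0) ∪ msupport (μ 1) ∪ msupport (μ 2) →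
      Dvar Φ μ (fun x => (x - z)⁻¹) = 0) :
    ∀ q : Polynomial ℂ, Dvar Φ μ (fun x => q.eval x) = 0 := by
  have := hμ.finite
  obtain ⟨R, hR, hsub⟩ := (((hμ.compactSupp 0).union (hμ.compactSupp 1)).union
    (hμ.compactSupp 2)).isBounded.subset_closedBall_lt 0 0
  have hsupp : ∀ j, ∀ᵐ x ∂μ j, x ∈ closedBall (0 : ℂ) R := fun j => by
    filter_upwards [ae_mem_msupport (μ j)] with x hx
    refine hsub ?_
    fin_cases j
    exacts [Or.inl (Or.inl hx), Or.inl (Or.inr hx), Or.inr hx]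
  have hfar : ∀ z : ℂ, R < ‖z‖ → Dvar Φ μ (fun x => (x - z)⁻¹) = 0 := fun z hzR =>
    hz z fun hzK => (mem_closedBall_zero_iff.1 (hsub hzK)).not_gt hzR
  intro q
  rw [Dvar_eval_eq_sum hR.le hsupp q]
  exact sum_eq_zero fun i _ => by rw [Dvar_pow_eq_zero hR.le hsupp hfar i, mul_zero]

/-- Let `μ⃗ ∈ M_α` with external fields satisfying `Φ₁′ − Φ₂′ = Φ₃′`.
If `D_{h_z}(μ⃗) = 0` for every `z` outside `supp μ₁ ∪ supp μ₂ ∪ supp μ₃`, then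
`D_q(μ⃗) = 0` for every polynomial `q`. -/
theorem Dvar_poly_eq_zero (α : ℝ) (hα : α ∈ Set.Icc (0 : ℝ) 1)
    (Φ : Fin 3 → Polynomial ℂ)
    (hΦ : Polynomial.derivative (Φ 0) - Polynomial.derivative (Φ 1) =
      Polynomial.derivative (Φ 2))
    (μ : Fin 3 → Measure ℂ) (hμ : InClassM α Φ μ)
    (hz : ∀ z : ℂ, z ∉ msupport (μ 0) ∪ msupport (μ 1) ∪ msupport (μ 2) →
      Dvar Φ μ (fun x => (x - z)⁻¹) = 0) :
    ∀ q : Polynomial ℂ, Dvar Φ μ (fun x => q.eval x) = 0 :=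
  Dvar_poly_eq_zero_general α Φ μ hμ hz
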